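/- Post-processing equivalent pairs of instruments have equal incompatibility robustness: if I₁ ~ Ĩ₁ and I₂ ~ Ĩ₂, then R_I(I₁, I₂) = R_I(Ĩ₁, Ĩ₂). -/

import Mathlib

/-!
A post-processing `J.op y = ∑ x, (R x).op y ∘ₗ I.op x` transports every witness of the robustness
problem: the noise instruments are post-processed by the same `R`, and a joint instrument `K` is
post-processed by the product instruments `R₁ x₁ ⊗ R₂ x₂`. Because each `R x` is trace preserving
in total, tracing out one factor of the new joint instrument leaves the post-processed marginal
of `K`. So the admissible weights `r` for `(I₁, I₂)` are admissible for `(J₁, J₂)` whenever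
`Jᵢ ≲ Iᵢ`, and mutual post-processing makes the two sets of admissible weights equal.

Complete positivity of compositions and tensor products comes from Kraus decompositions, read
off a decomposition of the Choi matrix into rank-one positive matrices.
-/

open Matrix
open scoped Kronecker BigOperators ComplexOrder

noncomputable section

namespace QI

/-- Linear maps between matrix algebras (superoperators). -/
abbrev MatMap (n m : Type*) [Fintype n] [Fintype m] :=
  Matrix n n ℂ →ₗ[ℂ] Matrix m m ℂ

variable {n m m₁ m₂ ι ι₁ ι₂ : Type*}

/-- The Choi matrix of a superoperator. -/
def choi [Fintype n] [DecidableEq n] [Fintype m] (Φ : MatMap n m) :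
    Matrix (n × m) (n × m) ℂ :=
  Matrix.of fun p q => Φ (Matrix.single p.1 q.1 1) p.2 q.2

/-- Complete positivity, via positive semidefiniteness of the Choi matrix. -/
def IsCP [Fintype n] [DecidableEq n] [Fintype m] (Φ : MatMap n m) : Prop :=
  (choi Φ).PosSemidef

/-- Trace preserving map. -/
def IsTP [Fintype n] [Fintype m] (Φ : MatMap n m) : Prop :=
  ∀ ρ, (Φ ρ).trace = ρ.trace

/-- Trace non-increasing map (on positive semidefinite inputs). -/
def IsTNI [Fintype n] [Fintype m] (Φ : MatMap n m) : Prop :=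
  ∀ ρ : Matrix n n ℂ, ρ.PosSemidef → (Φ ρ).trace.re ≤ ρ.trace.re

/-- A quantum channel: CP and trace preserving. -/
def IsChannel [Fintype n] [DecidableEq n] [Fintype m] (Φ : MatMap n m) : Prop :=
  IsCP Φ ∧ IsTP Φ

/-- A quantum instrument: a finite family of CP maps summing to a TP map. -/
structure Instrument (ι n m : Type*) [Fintype ι] [Fintype n] [DecidableEq n] [Fintype m] where
  op : ι → MatMap n m
  cp : ∀ x, IsCP (op x)
  tp : IsTP (∑ x, op x)

/-- Partial trace over the second tensor factor, as a linear map. -/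
def ptrace₂ [Fintype m₁] [Fintype m₂] :
    Matrix (m₁ × m₂) (m₁ × m₂) ℂ →ₗ[ℂ] Matrix m₁ m₁ ℂ where
  toFun M := Matrix.of fun i j => ∑ k, M (i, k) (j, k)
  map_add' M N := by ext i j; simp [Finset.sum_add_distrib]
  map_smul' c M := by ext i j; simp [Finset.mul_sum]

/-- Partial trace over the first tensor factor, as a linear map. -/
def ptrace₁ [Fintype m₁] [Fintype m₂] :
    Matrix (m₁ × m₂) (m₁ × m₂) ℂ →ₗ[ℂ] Matrix m₂ m₂ ℂ where
  toFun M := Matrix.of fun i j => ∑ k, M (k, i) (k, j)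
  map_add' M N := by ext i j; simp [Finset.sum_add_distrib]
  map_smul' c M := by ext i j; simp [Finset.mul_sum]

/-- Parallel compatibility of two instruments. -/
def ParallelCompatible [Fintype ι₁] [Fintype ι₂] [Fintype n] [DecidableEq n]
    [Fintype m₁] [Fintype m₂]
    (I₁ : Instrument ι₁ n m₁) (I₂ : Instrument ι₂ n m₂) : Prop :=
  ∃ J : Instrument (ι₁ × ι₂) n (m₁ × m₂),
    (∀ x, ∑ y, ptrace₂ ∘ₗ J.op (x, y) = I₁.op x) ∧
    (∀ y, ∑ x, ptrace₁ ∘ₗ J.op (x, y) = I₂.op y)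

/-- The dual (Heisenberg picture) of a superoperator, characterized by
`tr[Φ(ρ) M] = tr[ρ Φ*(M)]`. -/
def dualMap [Fintype n] [DecidableEq n] [Fintype m] (Φ : MatMap n m) (M : Matrix m m ℂ) :
    Matrix n n ℂ :=
  Matrix.of fun i j => (Φ (Matrix.single j i 1) * M).trace

/-- A POVM: positive semidefinite effects summing to the identity. -/
def IsPOVM [Fintype n] [DecidableEq n] (A : ι → Matrix n n ℂ) [Fintype ι] : Prop :=
  (∀ x, (A x).PosSemidef) ∧ ∑ x, A x = 1

/-- The POVM induced by an instrument: `A(x) = Φ_x*(𝟙)`. -/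
def inducedPOVM [Fintype ι] [Fintype n] [DecidableEq n] [Fintype m] [DecidableEq m]
    (I : Instrument ι n m) (x : ι) : Matrix n n ℂ :=
  dualMap (I.op x) 1

/-- Compatibility of two POVMs via a joint POVM. -/
def POVMsCompatible [Fintype ι₁] [Fintype ι₂] [Fintype n] [DecidableEq n]
    (A₁ : ι₁ → Matrix n n ℂ) (A₂ : ι₂ → Matrix n n ℂ) : Prop :=
  ∃ G : ι₁ × ι₂ → Matrix n n ℂ, IsPOVM G ∧
    (∀ x, ∑ y, G (x, y) = A₁ x) ∧ (∀ y, ∑ x, G (x, y) = A₂ y)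

/-- Compatibility of two channels via a joint channel. -/
def ChannelsCompatible [Fintype n] [DecidableEq n] [Fintype m₁] [Fintype m₂]
    (Φ₁ : MatMap n m₁) (Φ₂ : MatMap n m₂) : Prop :=
  ∃ Λ : MatMap n (m₁ × m₂), IsChannel Λ ∧
    ptrace₂ ∘ₗ Λ = Φ₁ ∧ ptrace₁ ∘ₗ Λ = Φ₂

/-- Generalized incompatibility robustness of a pair of instruments. -/
def RI [Fintype ι₁] [Fintype ι₂] [Fintype n] [DecidableEq n]
    [Fintype m₁] [Fintype m₂]
    (I₁ : Instrument ι₁ n m₁) (I₂ : Instrument ι₂ n m₂) : ℝ :=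
  sInf {r : ℝ | 0 ≤ r ∧
    ∃ (N₁ : Instrument ι₁ n m₁) (N₂ : Instrument ι₂ n m₂)
      (J : Instrument (ι₁ × ι₂) n (m₁ × m₂)),
      (∀ x, ((1 + r : ℝ) : ℂ)⁻¹ • (I₁.op x + (r : ℂ) • N₁.op x)
          = ∑ y, ptrace₂ ∘ₗ J.op (x, y)) ∧
      (∀ y, ((1 + r : ℝ) : ℂ)⁻¹ • (I₂.op y + (r : ℂ) • N₂.op y)
          = ∑ x, ptrace₁ ∘ₗ J.op (x, y))}

/-- Generalized incompatibility robustness of a pair of POVMs. -/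
def RM [Fintype ι₁] [Fintype ι₂] [Fintype n] [DecidableEq n]
    (A₁ : ι₁ → Matrix n n ℂ) (A₂ : ι₂ → Matrix n n ℂ) : ℝ :=
  sInf {r : ℝ | 0 ≤ r ∧
    ∃ (B₁ : ι₁ → Matrix n n ℂ) (B₂ : ι₂ → Matrix n n ℂ) (G : ι₁ × ι₂ → Matrix n n ℂ),
      IsPOVM B₁ ∧ IsPOVM B₂ ∧ (∀ p, (G p).PosSemidef) ∧
      (∀ x, ((1 + r : ℝ) : ℂ)⁻¹ • (A₁ x + (r : ℂ) • B₁ x) = ∑ y, G (x, y)) ∧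
      (∀ y, ((1 + r : ℝ) : ℂ)⁻¹ • (A₂ y + (r : ℂ) • B₂ y) = ∑ x, G (x, y))}

/-- Generalized incompatibility robustness of a pair of channels. -/
def RC [Fintype n] [DecidableEq n] [Fintype m₁] [Fintype m₂]
    (Φ₁ : MatMap n m₁) (Φ₂ : MatMap n m₂) : ℝ :=
  sInf {r : ℝ | 0 ≤ r ∧
    ∃ (N₁ : MatMap n m₁) (N₂ : MatMap n m₂) (Λ : MatMap n (m₁ × m₂)),
      IsChannel N₁ ∧ IsChannel N₂ ∧ IsChannel Λ ∧
      ((1 + r : ℝ) : ℂ)⁻¹ • (Φ₁ + (r : ℂ) • N₁) = ptrace₂ ∘ₗ Λ ∧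
      ((1 + r : ℝ) : ℂ)⁻¹ • (Φ₂ + (r : ℂ) • N₂) = ptrace₁ ∘ₗ Λ}

/-- Post-processing relation on instruments: `I₂ ≲ I₁`. -/
def PostProcessingOf [Fintype ι₁] [Fintype ι₂] [Fintype n] [DecidableEq n]
    [Fintype m₁] [DecidableEq m₁] [Fintype m₂]
    (I₂ : Instrument ι₂ n m₂) (I₁ : Instrument ι₁ n m₁) : Prop :=
  ∃ R : ι₁ → Instrument ι₂ m₁ m₂,
    ∀ y, I₂.op y = ∑ x, (R x).op y ∘ₗ I₁.op x

/-- A density matrix (quantum state). -/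
def IsState [Fintype m] (η : Matrix m m ℂ) : Prop :=
  η.PosSemidef ∧ η.trace = 1

/-- A pure state. -/
def IsPureState [Fintype m] (η : Matrix m m ℂ) : Prop :=
  ∃ v : m → ℂ, (∑ i, star (v i) * v i) = 1 ∧ η = Matrix.vecMulVec v (star v)

/-- The trash-and-prepare map `ρ ↦ tr(ρ) • η`. -/
def trashPrep [Fintype n] [Fintype m] (η : Matrix m m ℂ) : MatMap n m :=
  (Matrix.traceLinearMap n ℂ ℂ).smulRight η

/-- Tensoring with a fixed matrix on the right, as a linear map. -/
def kronRight [Fintype m₁] [Fintype m₂] (B : Matrix m₂ m₂ ℂ) :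
    Matrix m₁ m₁ ℂ →ₗ[ℂ] Matrix (m₁ × m₂) (m₁ × m₂) ℂ where
  toFun A := A ⊗ₖ B
  map_add' A A' := by ext ⟨i, k⟩ ⟨j, l⟩; simp [Matrix.kroneckerMap_apply, add_mul]
  map_smul' c A := by ext ⟨i, k⟩ ⟨j, l⟩; simp [Matrix.kroneckerMap_apply, mul_assoc]

/-- Tensoring with a fixed matrix on the left, as a linear map. -/
def kronLeft [Fintype m₁] [Fintype m₂] (A : Matrix m₁ m₁ ℂ) :
    Matrix m₂ m₂ ℂ →ₗ[ℂ] Matrix (m₁ × m₂) (m₁ × m₂) ℂ where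
  toFun B := A ⊗ₖ B
  map_add' B B' := by ext ⟨i, k⟩ ⟨j, l⟩; simp [Matrix.kroneckerMap_apply, mul_add]
  map_smul' c B := by
    ext ⟨i, k⟩ ⟨j, l⟩
    simp only [Matrix.kroneckerMap_apply, Matrix.smul_apply, smul_eq_mul, RingHom.id_apply]
    ring

/-- Measure-and-prepare operation: `ρ ↦ tr(ρ A) • σ`. -/
def mpOp [Fintype n] [Fintype m] (A : Matrix n n ℂ) (σ : Matrix m m ℂ) : MatMap n m where
  toFun ρ := (ρ * A).trace • σ
  map_add' ρ ρ' := by simp [Matrix.add_mul, Matrix.trace_add, add_smul]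
  map_smul' c ρ := by simp [Matrix.smul_mul, Matrix.trace_smul, smul_smul]

/-- Conjugation by a Kraus operator: `ρ ↦ K ρ K†`. -/
def krausOp [Fintype n] [Fintype m] (K : Matrix m n ℂ) : MatMap n m where
  toFun ρ := K * ρ * Kᴴ
  map_add' ρ ρ' := by simp [Matrix.mul_add, Matrix.add_mul]
  map_smul' c ρ := by simp [Matrix.mul_smul, Matrix.smul_mul]

end QI

namespace QI

variable {n m k m₁ m₂ k₁ k₂ ι κ ι₁ ι₂ κ₁ κ₂ : Type*}

lemma sum_comp {R M N P ι : Type*} [CommSemiring R] [AddCommMonoid M] [AddCommMonoid N]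
    [AddCommMonoid P] [Module R M] [Module R N] [Module R P]
    (s : Finset ι) (f : ι → N →ₗ[R] P) (g : M →ₗ[R] N) :
    (∑ i ∈ s, f i) ∘ₗ g = ∑ i ∈ s, f i ∘ₗ g := by
  ext; simp

lemma comp_sum {R M N P ι : Type*} [CommSemiring R] [AddCommMonoid M] [AddCommMonoid N]
    [AddCommMonoid P] [Module R M] [Module R N] [Module R P]
    (g : N →ₗ[R] P) (s : Finset ι) (f : ι → M →ₗ[R] N) :
    g ∘ₗ (∑ i ∈ s, f i) = ∑ i ∈ s, g ∘ₗ f i := by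
  ext; simp

lemma krausOp_comp [Fintype n] [Fintype m] [Fintype k] (K : Matrix k m ℂ) (L : Matrix m n ℂ) :
    krausOp K ∘ₗ krausOp L = krausOp (K * L) := by
  ext1 ρ
  simp [krausOp, Matrix.conjTranspose_mul, Matrix.mul_assoc]

lemma isTP_sum_iff [Fintype n] [Fintype m] (s : Finset ι) (Φ : ι → MatMap n m) :
    IsTP (∑ i ∈ s, Φ i) ↔ ∀ ρ, ∑ i ∈ s, (Φ i ρ).trace = ρ.trace := by
  simp [IsTP, LinearMap.sum_apply, Matrix.trace_sum]

section ChoiKraus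

variable [Fintype n] [DecidableEq n] [Fintype m]

lemma choi_injective : Function.Injective (choi : MatMap n m → _) := by
  intro Φ Ψ h
  refine (Matrix.stdBasis ℂ n n).ext fun ⟨a, b⟩ => ?_
  ext p q
  simpa [Matrix.stdBasis_eq_single, choi] using congrFun (congrFun h (a, p)) (b, q)

lemma choi_sum (s : Finset ι) (Φ : ι → MatMap n m) :
    choi (∑ i ∈ s, Φ i) = ∑ i ∈ s, choi (Φ i) := by
  ext p q
  simp [choi, Matrix.sum_apply]

lemma isCP_sum (s : Finset ι) {Φ : ι → MatMap n m} (h : ∀ i ∈ s, IsCP (Φ i)) :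
    IsCP (∑ i ∈ s, Φ i) := by
  rw [IsCP, choi_sum]
  exact Finset.sum_induction _ _ (fun _ _ => .add) .zero h

lemma choi_krausOp (K : Matrix m n ℂ) :
    choi (krausOp K) = vecMulVec (fun x => K x.2 x.1) (star fun x => K x.2 x.1) := by
  ext ⟨a, p⟩ ⟨b, q⟩
  simp [choi, krausOp, Matrix.mul_apply, vecMulVec_apply, Matrix.single_apply, ite_and,
    Finset.sum_ite_eq]

lemma isCP_krausOp (K : Matrix m n ℂ) : IsCP (krausOp K) := by
  rw [IsCP, choi_krausOp]
  exact posSemidef_vecMulVec_self_star _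

lemma IsCP.exists_kraus {Φ : MatMap n m} (h : IsCP Φ) :
    ∃ (r : ℕ) (K : Fin r → Matrix m n ℂ), Φ = ∑ i, krausOp (K i) := by
  obtain ⟨r, v, hv⟩ := Matrix.posSemidef_iff_eq_sum_vecMulVec.mp h
  refine ⟨r, fun i => Matrix.of fun p a => v i (a, p), choi_injective ?_⟩
  simp only [hv, choi_sum, choi_krausOp]
  rfl

lemma IsCP.comp [DecidableEq m] [Fintype k] {Φ : MatMap m k} {Ψ : MatMap n m}
    (hΦ : IsCP Φ) (hΨ : IsCP Ψ) : IsCP (Φ ∘ₗ Ψ) := by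
  obtain ⟨r, K, rfl⟩ := hΦ.exists_kraus
  obtain ⟨s, L, rfl⟩ := hΨ.exists_kraus
  simp only [sum_comp, comp_sum, krausOp_comp]
  exact isCP_sum _ fun i _ => isCP_sum _ fun j _ => isCP_krausOp _

end ChoiKraus

section PartialTrace

variable [Fintype m₁] [Fintype m₂]

@[simp]
lemma ptrace₂_kronecker (A : Matrix m₁ m₁ ℂ) (B : Matrix m₂ m₂ ℂ) :
    ptrace₂ (A ⊗ₖ B) = B.trace • A := by
  ext i j
  simp [ptrace₂, Matrix.trace, ← Finset.mul_sum, mul_comm]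

@[simp]
lemma ptrace₁_kronecker (A : Matrix m₁ m₁ ℂ) (B : Matrix m₂ m₂ ℂ) :
    ptrace₁ (A ⊗ₖ B) = A.trace • B := by
  ext i j
  simp [ptrace₁, Matrix.trace, ← Finset.sum_mul]

lemma trace_ptrace₂ (M : Matrix (m₁ × m₂) (m₁ × m₂) ℂ) : (ptrace₂ M).trace = M.trace := by
  simp [ptrace₂, Matrix.trace, Fintype.sum_prod_type]

end PartialTrace

section TensorMap

variable [Fintype m₁] [DecidableEq m₁] [Fintype m₂] [DecidableEq m₂]
  [Fintype k₁] [DecidableEq k₁] [Fintype k₂] [DecidableEq k₂]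

def tensorMap : MatMap m₁ k₁ →ₗ[ℂ] MatMap m₂ k₂ →ₗ[ℂ] MatMap (m₁ × m₂) (k₁ × k₂) :=
  (TensorProduct.mapBilinear (RingHom.id ℂ) _ _ _ _).compr₂
    (LinearEquiv.arrowCongr (kroneckerLinearEquiv m₁ m₁ m₂ m₂ ℂ)
      (kroneckerLinearEquiv k₁ k₁ k₂ k₂ ℂ)).toLinearMap

@[simp]
lemma tensorMap_kronecker (Φ : MatMap m₁ k₁) (Ψ : MatMap m₂ k₂) (A : Matrix m₁ m₁ ℂ)
    (B : Matrix m₂ m₂ ℂ) : tensorMap Φ Ψ (A ⊗ₖ B) = Φ A ⊗ₖ Ψ B := by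
  simp [tensorMap]

lemma ext_kronecker {X : Type*} [AddCommMonoid X] [Module ℂ X]
    {f g : Matrix (m₁ × m₂) (m₁ × m₂) ℂ →ₗ[ℂ] X}
    (h : ∀ A B, f (A ⊗ₖ B) = g (A ⊗ₖ B)) : f = g := by
  have := TensorProduct.ext' (g := f ∘ₗ (kroneckerLinearEquiv m₁ m₁ m₂ m₂ ℂ).toLinearMap)
    (h := g ∘ₗ (kroneckerLinearEquiv m₁ m₁ m₂ m₂ ℂ).toLinearMap) fun A B => h A B
  exact (LinearEquiv.eq_comp_toLinearMap_iff _ _).mp this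

lemma ptrace₂_comp_tensorMap (Φ : MatMap m₁ k₁) {Ψ : MatMap m₂ k₂} (hΨ : IsTP Ψ) :
    ptrace₂ ∘ₗ tensorMap Φ Ψ = Φ ∘ₗ ptrace₂ :=
  ext_kronecker fun A B => by simp [hΨ B]

lemma ptrace₁_comp_tensorMap {Φ : MatMap m₁ k₁} (hΦ : IsTP Φ) (Ψ : MatMap m₂ k₂) :
    ptrace₁ ∘ₗ tensorMap Φ Ψ = Ψ ∘ₗ ptrace₁ :=
  ext_kronecker fun A B => by simp [hΦ A]

lemma IsTP.tensorMap {Φ : MatMap m₁ k₁} {Ψ : MatMap m₂ k₂} (hΦ : IsTP Φ) (hΨ : IsTP Ψ) :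
    IsTP (tensorMap Φ Ψ) := fun M => by
  rw [← trace_ptrace₂, ← LinearMap.comp_apply, ptrace₂_comp_tensorMap Φ hΨ,
    LinearMap.comp_apply, hΦ, trace_ptrace₂]

lemma tensorMap_krausOp (K : Matrix k₁ m₁ ℂ) (L : Matrix k₂ m₂ ℂ) :
    tensorMap (krausOp K) (krausOp L) = krausOp (K ⊗ₖ L) :=
  ext_kronecker fun A B => by
    simp [krausOp, conjTranspose_kronecker, mul_kronecker_mul]

lemma IsCP.tensorMap {Φ : MatMap m₁ k₁} {Ψ : MatMap m₂ k₂} (hΦ : IsCP Φ) (hΨ : IsCP Ψ) :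
    IsCP (tensorMap Φ Ψ) := by
  obtain ⟨r, K, rfl⟩ := hΦ.exists_kraus
  obtain ⟨s, L, rfl⟩ := hΨ.exists_kraus
  simp only [map_sum, LinearMap.sum_apply, tensorMap_krausOp]
  exact isCP_sum _ fun i _ => isCP_sum _ fun j _ => isCP_krausOp _

end TensorMap

lemma isTP_sum_sum_comp [Fintype ι] [Fintype κ] [Fintype n] [Fintype m] [Fintype k]
    {R : ι → κ → MatMap m k} {N : ι → MatMap n m}
    (hR : ∀ x, IsTP (∑ u, R x u)) (hN : IsTP (∑ x, N x)) :
    IsTP (∑ u, ∑ x, R x u ∘ₗ N x) := by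
  simp only [isTP_sum_iff] at hR hN ⊢
  intro ρ
  simp only [LinearMap.sum_apply, Matrix.trace_sum, LinearMap.comp_apply]
  rw [Finset.sum_comm]
  simp only [hR, hN]

def Instrument.postProcess [Fintype ι] [Fintype κ] [Fintype n] [DecidableEq n] [Fintype m]
    [DecidableEq m] [Fintype k] (R : ι → Instrument κ m k) (N : Instrument ι n m) :
    Instrument κ n k where
  op u := ∑ x, (R x).op u ∘ₗ N.op x
  cp u := isCP_sum _ fun x _ => ((R x).cp u).comp (N.cp x)
  tp := isTP_sum_sum_comp (fun x => (R x).tp) N.tp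

def Instrument.tensor [Fintype κ₁] [Fintype κ₂] [Fintype m₁] [DecidableEq m₁] [Fintype m₂]
    [DecidableEq m₂] [Fintype k₁] [DecidableEq k₁] [Fintype k₂] [DecidableEq k₂]
    (A : Instrument κ₁ m₁ k₁) (B : Instrument κ₂ m₂ k₂) :
    Instrument (κ₁ × κ₂) (m₁ × m₂) (k₁ × k₂) where
  op w := tensorMap (A.op w.1) (B.op w.2)
  cp w := (A.cp w.1).tensorMap (B.cp w.2)
  tp := by
    have : ∑ w : κ₁ × κ₂, tensorMap (A.op w.1) (B.op w.2)
        = tensorMap (∑ u, A.op u) (∑ v, B.op v) := by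
      simp only [Fintype.sum_prod_type, map_sum, LinearMap.sum_apply]
      exact Finset.sum_comm
    rw [this]
    exact A.tp.tensorMap B.tp

/-- The admissible weights whose infimum is `RI I₁ I₂`. As `sInf ∅ = 0`, `RI` is not monotone
along inclusions of these sets, so the sets themselves are compared. -/
def robustSet [Fintype ι₁] [Fintype ι₂] [Fintype n] [DecidableEq n] [Fintype m₁] [Fintype m₂]
    (I₁ : Instrument ι₁ n m₁) (I₂ : Instrument ι₂ n m₂) : Set ℝ :=
  {r : ℝ | 0 ≤ r ∧
    ∃ (N₁ : Instrument ι₁ n m₁) (N₂ : Instrument ι₂ n m₂)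
      (J : Instrument (ι₁ × ι₂) n (m₁ × m₂)),
      (∀ x, ((1 + r : ℝ) : ℂ)⁻¹ • (I₁.op x + (r : ℂ) • N₁.op x)
          = ∑ y, ptrace₂ ∘ₗ J.op (x, y)) ∧
      (∀ y, ((1 + r : ℝ) : ℂ)⁻¹ • (I₂.op y + (r : ℂ) • N₂.op y)
          = ∑ x, ptrace₁ ∘ₗ J.op (x, y))}

section PostProcessingOf

variable [Fintype ι₁] [Fintype ι₂] [Fintype κ₁] [Fintype κ₂] [Fintype n] [DecidableEq n]
  [Fintype m₁] [DecidableEq m₁] [Fintype m₂] [DecidableEq m₂]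
  [Fintype k₁] [DecidableEq k₁] [Fintype k₂] [DecidableEq k₂]
  (R₁ : ι₁ → Instrument κ₁ m₁ k₁) (R₂ : ι₂ → Instrument κ₂ m₂ k₂)

lemma sum_ptrace₂_comp_postProcess_tensor (K : Instrument (ι₁ × ι₂) n (m₁ × m₂)) (u : κ₁) :
    ∑ v, ptrace₂ ∘ₗ (K.postProcess fun p => (R₁ p.1).tensor (R₂ p.2)).op (u, v)
      = ∑ x, (R₁ x).op u ∘ₗ ∑ y, ptrace₂ ∘ₗ K.op (x, y) := calc
  _ = ∑ p : ι₁ × ι₂,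
        (ptrace₂ ∘ₗ tensorMap ((R₁ p.1).op u) (∑ v, (R₂ p.2).op v)) ∘ₗ K.op p := by
      simp only [Instrument.postProcess, Instrument.tensor, comp_sum, map_sum,
        sum_comp, LinearMap.comp_assoc]
      exact Finset.sum_comm
  _ = _ := by
      simp only [ptrace₂_comp_tensorMap _ (R₂ _).tp, LinearMap.comp_assoc, comp_sum,
        Fintype.sum_prod_type]

lemma sum_ptrace₁_comp_postProcess_tensor (K : Instrument (ι₁ × ι₂) n (m₁ × m₂)) (v : κ₂) :
    ∑ u, ptrace₁ ∘ₗ (K.postProcess fun p => (R₁ p.1).tensor (R₂ p.2)).op (u, v)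
      = ∑ y, (R₂ y).op v ∘ₗ ∑ x, ptrace₁ ∘ₗ K.op (x, y) := calc
  _ = ∑ p : ι₁ × ι₂,
        (ptrace₁ ∘ₗ tensorMap (∑ u, (R₁ p.1).op u) ((R₂ p.2).op v)) ∘ₗ K.op p := by
      simp only [Instrument.postProcess, Instrument.tensor, comp_sum, map_sum,
        LinearMap.sum_apply, sum_comp, LinearMap.comp_assoc]
      exact Finset.sum_comm
  _ = _ := by
      simp only [ptrace₁_comp_tensorMap (R₁ _).tp, LinearMap.comp_assoc, comp_sum,
        Fintype.sum_prod_type]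
      exact Finset.sum_comm

lemma robustSet_subset_of_postProcessingOf {I₁ : Instrument ι₁ n m₁} {I₂ : Instrument ι₂ n m₂}
    {J₁ : Instrument κ₁ n k₁} {J₂ : Instrument κ₂ n k₂}
    (h₁ : PostProcessingOf J₁ I₁) (h₂ : PostProcessingOf J₂ I₂) :
    robustSet I₁ I₂ ⊆ robustSet J₁ J₂ := by
  rintro r ⟨hr, N₁, N₂, K, hK₁, hK₂⟩
  obtain ⟨R₁, hR₁⟩ := h₁
  obtain ⟨R₂, hR₂⟩ := h₂
  refine ⟨hr, N₁.postProcess R₁, N₂.postProcess R₂,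
    K.postProcess fun p => (R₁ p.1).tensor (R₂ p.2), fun u => ?_, fun v => ?_⟩
  · rw [sum_ptrace₂_comp_postProcess_tensor, hR₁ u]
    simp only [← hK₁, Instrument.postProcess, LinearMap.comp_smul, LinearMap.comp_add,
      Finset.smul_sum, Finset.sum_add_distrib, smul_add]
  · rw [sum_ptrace₁_comp_postProcess_tensor, hR₂ v]
    simp only [← hK₂, Instrument.postProcess, LinearMap.comp_smul, LinearMap.comp_add,
      Finset.smul_sum, Finset.sum_add_distrib, smul_add]

end PostProcessingOf

end QI

end

open QI in
/-- post-processing equivalent pairs have equal robustness. -/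
theorem RI_eq_of_postprocessing_equiv
    {ι₁ ι₂ κ₁ κ₂ n m₁ m₂ k₁ k₂ : Type*}
    [Fintype ι₁] [Fintype ι₂] [Fintype κ₁] [Fintype κ₂]
    [Fintype n] [DecidableEq n]
    [Fintype m₁] [DecidableEq m₁] [Fintype m₂] [DecidableEq m₂]
    [Fintype k₁] [DecidableEq k₁] [Fintype k₂] [DecidableEq k₂]
    (I₁ : Instrument ι₁ n m₁) (I₂ : Instrument ι₂ n m₂)
    (J₁ : Instrument κ₁ n k₁) (J₂ : Instrument κ₂ n k₂)
    (h₁ : PostProcessingOf J₁ I₁ ∧ PostProcessingOf I₁ J₁)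
    (h₂ : PostProcessingOf J₂ I₂ ∧ PostProcessingOf I₂ J₂) :
    RI I₁ I₂ = RI J₁ J₂ :=
  congrArg sInf <| (robustSet_subset_of_postProcessingOf h₁.1 h₂.1).antisymm
    (robustSet_subset_of_postProcessingOf h₁.2 h₂.2)
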